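/- arXiv:2202.09341 — 5 statements merged into one kernel-verified Lean document; each statement's English description precedes it below -/
import Mathlib

section
/- Consider the recursion Y_{n+1} = max(Y_n, P_n) − 1 truncated at 0 (i.e., Y_{n+1} = (max(Y_n, P_n) − 1)⁺) on ℝ₊, and the map g(y,p) = (max(y,p) − 1)⁺. Then for every fixed p ≥ 0, the map y ↦ g(y,p) is nondecreasing on ℝ₊; moreover, if φ(x) denotes the largest remaining patience in state x of the matching model (with φ(∅)=0), then φ(f^Φ(x,(p,v))) ≤ g(φ(x), p) for any admissible matching policy Φ, any state x and any arrival (p,v). -/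
/-- The infinite-server recursion map `g(y, p) = (max(y, p) − 1)⁺`. -/
noncomputable def gmap (y q : ℝ) : ℝ := max (max y q - 1) 0

/-- Largest remaining patience in a state of the matching model (`φ(∅) = 0`). -/
def phi {V : Type*} (x : List (ℝ × V)) : ℝ := (x.map Prod.fst).foldr max 0

theorem gmap_monotone (q : ℝ) : Monotone fun y => gmap y q :=
  fun _ _ h => max_le_max (sub_le_sub_right (max_le_max h le_rfl) 1) le_rfl

section Phi

variable {V : Type*}

noncomputable def elapse (y : List (ℝ × V)) : List (ℝ × V) :=
  (y.filter fun r => 1 ≤ r.1).map fun r => (r.1 - 1, r.2)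

theorem phi_nonneg (x : List (ℝ × V)) : 0 ≤ phi x := by
  induction x with
  | nil => simp [phi]
  | cons a t ih => exact ih.trans (le_max_right _ _)

theorem le_phi_of_mem {x : List (ℝ × V)} {a : ℝ × V} (h : a ∈ x) : a.1 ≤ phi x := by
  induction x with
  | nil => simp at h
  | cons b t ih =>
    rcases List.mem_cons.mp h with rfl | h
    · exact le_max_left _ _
    · exact (ih h).trans (le_max_right _ _)

theorem phi_le_of_forall_le {x : List (ℝ × V)} {b : ℝ} (hb : 0 ≤ b)
    (h : ∀ a ∈ x, a.1 ≤ b) : phi x ≤ b := by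
  induction x with
  | nil => exact hb
  | cons a t ih =>
    exact max_le (h a List.mem_cons_self) (ih fun a ha => h a (List.mem_cons_of_mem _ ha))

theorem List.Sublist.phi_le {x y : List (ℝ × V)} (h : y.Sublist x) : phi y ≤ phi x :=
  phi_le_of_forall_le (phi_nonneg x) fun _ ha => le_phi_of_mem (h.subset ha)

theorem phi_append_singleton (x : List (ℝ × V)) (a : ℝ × V) :
    phi (x ++ [a]) = max (phi x) a.1 := by
  refine le_antisymm ?_ (max_le (List.sublist_append_left x [a]).phi_le (le_phi_of_mem (by simp)))
  refine phi_le_of_forall_le ((phi_nonneg x).trans (le_max_left _ _)) fun r hr => ?_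
  rcases List.mem_append.mp hr with hr | hr
  · exact (le_phi_of_mem hr).trans (le_max_left _ _)
  · rw [List.mem_singleton.mp hr]
    exact le_max_right _ _

theorem phi_elapse_le (y : List (ℝ × V)) : phi (elapse y) ≤ max (phi y - 1) 0 := by
  refine phi_le_of_forall_le (le_max_right _ _) fun a ha => ?_
  obtain ⟨r, hr, rfl⟩ := List.mem_map.mp ha
  exact (sub_le_sub_right (le_phi_of_mem (List.mem_filter.mp hr).1) 1).trans (le_max_left _ _)

end Phi

/-- First, `y ↦ g(y, p)` is nondecreasing on `ℝ₊` for every `p ≥ 0`. Second, for any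
admissible matching policy, one step of the profile chain (the result state is obtained by
keeping a subword `y` of `x` with the arrival `(p, v)` possibly appended — the matched pair
being removed — then discarding items of remaining patience `< 1` and decreasing all
remaining patiences by 1) satisfies `φ(f^Φ(x, (p, v))) ≤ g(φ(x), p)`. -/
theorem stmt4 {V : Type*} :
    (∀ q : ℝ, 0 ≤ q → MonotoneOn (fun y => gmap y q) (Set.Ici (0 : ℝ))) ∧
    (∀ (x y : List (ℝ × V)) (q : ℝ) (c : V), 0 ≤ q →
      y.Sublist (x ++ [(q, c)]) →
      phi ((y.filter (fun r => 1 ≤ r.1)).map (fun r => (r.1 - 1, r.2))) ≤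
        gmap (phi x) q) := by
  refine ⟨fun q _ => (gmap_monotone q).monotoneOn _, fun x y q c _ hsub => ?_⟩
  calc phi (elapse y)
      ≤ max (phi y - 1) 0 := phi_elapse_le y
    _ ≤ max (phi (x ++ [(q, c)]) - 1) 0 := by gcongr; exact hsub.phi_le
    _ = gmap (phi x) q := by rw [phi_append_singleton]; rfl
end

section
/- In a discrete matching model with deterministic impatience p under the First Come, First Matched policy, for every class a ∈ 𝕍, every k ∈ {0,...,p−1} and every arrival word w of length p, the states W^{FCFM}(x^a(k), w) and W^{FCFM}(x^a(k+1), w) differ in at most one letter position, the difference consisting in one state having some class letter where the other has 0. Here x^a(k) = 0^k a^{p−k} is the buffer containing p−k items of class a preceded by k empty slots. -/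
/-- Word-profile state of the matching model with deterministic patience `p`:
a list of length `p` over `𝕍 ∪ {0}`, oldest item first; `none` encodes the letter `0`. -/
abbrev MState (V : Type*) := List (Option V)

/-- An admissible matching policy: given the current word-profile and the class of the
arriving item, it either returns the position of the stored item it is matched with
(which must hold a compatible class), or `none`, which is only allowed when no stored
item is compatible. -/
def Admissible {V : Type*} (G : SimpleGraph V) (Φ : MState V → V → Option ℕ) : Prop :=
  ∀ (x : MState V) (c : V),
    (∀ i : ℕ, Φ x c = some i → ∃ d : V, x.getD i none = some d ∧ G.Adj c d) ∧
    (Φ x c = none → ∀ (i : ℕ) (d : V), x.getD i none = some d → ¬ G.Adj c d)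

/-- One step of the word-profile chain under policy `Φ`: the match (if any) is erased and
replaced by `0`, the oldest item leaves, and the arrival is recorded (as its class if
unmatched, as `0` if matched). -/
def mstep {V : Type*} (Φ : MState V → V → Option ℕ) (x : MState V) (c : V) : MState V :=
  match Φ x c with
  | some i => (x.set i none).tail ++ [none]
  | none => x.tail ++ [some c]

/-- `W Φ x w`: state reached from `x` after feeding the arrival word `w`. -/
def W {V : Type*} (Φ : MState V → V → Option ℕ) (x : MState V) (w : List V) : MState V :=
  w.foldl (mstep Φ) x

/-- The First Come, First Matched policy: the arrival is matched with the oldest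
compatible stored item, if any. -/
def fcfm {V : Type*} (G : SimpleGraph V) [DecidableRel G.Adj] :
    MState V → V → Option ℕ :=
  fun x c => x.findIdx? (fun o => o.elim false fun d => decide (G.Adj c d))

/-- A word `w` of length `2p` is strongly synchronizing if (1-indexed) `w_i ⌣̸ w_j` for all
`i ∈ {1,…,p}` and `j ∈ {p+1,…,p+i}`; here indices are 0-based. -/
def StronglySync {V : Type*} [Inhabited V] (G : SimpleGraph V) (p : ℕ) (w : List V) : Prop :=
  w.length = 2 * p ∧
    ∀ i j : ℕ, i < p → p ≤ j → j ≤ p + i → ¬ G.Adj (w.getD i default) (w.getD j default)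

/-- The buffer `x^a(k) = 0^k a^{p−k}`. -/
def xa {V : Type*} (p k : ℕ) (a : V) : MState V :=
  List.replicate k none ++ List.replicate (p - k) (some a)

/-!
If `x` arises from `y` by filling one empty slot, one FCFM step maps the pair to equal
buffers or to a pair in which again one buffer arises from the other by filling one empty
slot; and `x^a(k)` arises from `x^a(k+1)` in this way. Write `x = l ++ d :: r` and
`y = l ++ 0 :: r`. If the arrival finds a partner in `l` or is incompatible with `d`, both
buffers match at the same place. If it matches `d`, then `x` becomes `l ++ 0 :: r`, while `y`
either matches the oldest compatible item of `r`, which `x` keeps, or matches nothing and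
stores the arrival where `x` records `0`. Shifting out the oldest slot preserves the relation
or makes the buffers equal.
-/

section Adjacency

variable {α : Type*} {x y : List (Option α)}

def FillsOneSlot (x y : List (Option α)) : Prop :=
  ∃ l d r, x = l ++ some d :: r ∧ y = l ++ none :: r

def WithinOneItem (x y : List (Option α)) : Prop :=
  x = y ∨ FillsOneSlot x y ∨ FillsOneSlot y x

theorem FillsOneSlot.withinOneItem (h : FillsOneSlot x y) : WithinOneItem x y :=
  Or.inr (Or.inl h)

theorem WithinOneItem.symm (h : WithinOneItem x y) : WithinOneItem y x := by
  rcases h with rfl | h | h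
  exacts [Or.inl rfl, Or.inr (Or.inr h), Or.inr (Or.inl h)]

theorem FillsOneSlot.append_left (s : List (Option α)) (h : FillsOneSlot x y) :
    FillsOneSlot (s ++ x) (s ++ y) := by
  obtain ⟨l, d, r, rfl, rfl⟩ := h
  exact ⟨s ++ l, d, r, by simp, by simp⟩

theorem FillsOneSlot.cons (o : Option α) (h : FillsOneSlot x y) :
    FillsOneSlot (o :: x) (o :: y) :=
  h.append_left [o]

theorem FillsOneSlot.append_right (s : List (Option α)) (h : FillsOneSlot x y) :
    FillsOneSlot (x ++ s) (y ++ s) := by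
  obtain ⟨l, d, r, rfl, rfl⟩ := h
  exact ⟨l, d, r ++ s, by simp, by simp⟩

theorem WithinOneItem.append_right (s : List (Option α)) (h : WithinOneItem x y) :
    WithinOneItem (x ++ s) (y ++ s) := by
  rcases h with rfl | h | h
  exacts [Or.inl rfl, Or.inr (Or.inl (h.append_right s)), Or.inr (Or.inr (h.append_right s))]

theorem FillsOneSlot.tail (h : FillsOneSlot x y) : WithinOneItem x.tail y.tail := by
  obtain ⟨l, d, r, rfl, rfl⟩ := h
  cases l with
  | nil => exact Or.inl rfl
  | cons o l => exact Or.inr (Or.inl ⟨l, d, r, rfl, rfl⟩)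

theorem FillsOneSlot.exists_getD (h : FillsOneSlot x y) :
    ∃ i < x.length, (∀ j, j ≠ i → x.getD j none = y.getD j none) ∧
      ∃ d, x.getD i none = some d ∧ y.getD i none = none := by
  obtain ⟨l, d, r, rfl, rfl⟩ := h
  refine ⟨l.length, by simp, fun j hj => ?_, d, by simp, by simp⟩
  rcases Nat.lt_or_gt_of_ne hj with hj | hj
  · rw [List.getD_append _ _ _ _ hj, List.getD_append _ _ _ _ hj]
  · obtain ⟨m, rfl⟩ : ∃ m, j = l.length + (m + 1) := ⟨j - l.length - 1, by omega⟩
    rw [List.getD_append_right _ _ _ _ (by omega), List.getD_append_right _ _ _ _ (by omega)]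
    simp

end Adjacency

section Buffers

variable {V : Type*}

theorem length_mstep (Φ : MState V → V → Option ℕ) {x : MState V} (hx : 0 < x.length)
    (c : V) : (mstep Φ x c).length = x.length := by
  unfold mstep
  split <;> simp <;> omega

theorem length_W (Φ : MState V → V → Option ℕ) {x : MState V} (hx : 0 < x.length)
    (w : List V) : (W Φ x w).length = x.length := by
  induction w generalizing x with
  | nil => rfl
  | cons b w ih =>
    have hstep := length_mstep Φ hx b
    exact (ih (hstep ▸ hx)).trans hstep

theorem length_xa {p k : ℕ} (hk : k ≤ p) (a : V) : (xa p k a).length = p := by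
  simp [xa]
  omega

theorem fillsOneSlot_xa {p k : ℕ} (hk : k < p) (a : V) :
    FillsOneSlot (xa p k a) (xa p (k + 1) a) := by
  obtain ⟨m, rfl⟩ : ∃ m, p = k + 1 + m := ⟨p - k - 1, by omega⟩
  refine ⟨List.replicate k none, a, List.replicate m (some a), ?_, ?_⟩
  · simp [xa, show k + 1 + m - k = m + 1 by omega, List.replicate_succ]
  · simp [xa, List.replicate_succ']

end Buffers

section FCFM

variable {V : Type*} (G : SimpleGraph V) [DecidableRel G.Adj] (c : V)

def Compatible (o : Option V) : Bool := o.elim false fun d => decide (G.Adj c d)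

def matchOldest : MState V → MState V
  | [] => []
  | o :: x => if Compatible G c o then none :: x else o :: matchOldest x

variable {G c}

theorem set_eq_matchOldest_of_findIdx? :
    ∀ {x : MState V} {i : ℕ}, x.findIdx? (Compatible G c) = some i →
      x.set i none = matchOldest G c x
  | [], _, h => by simp at h
  | o :: x, i, h => by
    rw [List.findIdx?_cons] at h
    by_cases ho : Compatible G c o
    · simp only [ho, if_true, Option.some.injEq] at h
      simp [← h, matchOldest, ho]
    · simp only [ho, Bool.false_eq_true, if_false, Option.map_eq_some_iff] at h
      obtain ⟨i, hi, rfl⟩ := h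
      simp [matchOldest, ho, set_eq_matchOldest_of_findIdx? hi]

theorem matchOldest_eq_self {x : MState V} (h : x.any (Compatible G c) = false) :
    matchOldest G c x = x := by
  induction x with
  | nil => rfl
  | cons o x ih =>
    simp only [List.any_cons, Bool.or_eq_false_iff] at h
    simp [matchOldest, h.1, ih h.2]

theorem mstep_fcfm_eq (x : MState V) :
    mstep (fcfm G) x c =
      (matchOldest G c x).tail ++ [if x.any (Compatible G c) then none else some c] := by
  have hany : x.any (Compatible G c) = (fcfm G x c).isSome := List.findIdx?_isSome.symm
  unfold mstep
  cases h : fcfm G x c with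
  | some i =>
    rw [h] at hany
    simp [set_eq_matchOldest_of_findIdx? h, hany]
  | none =>
    rw [h] at hany
    simp [matchOldest_eq_self hany, hany]

theorem matchOldest_append (l m : MState V) :
    matchOldest G c (l ++ m) =
      if l.any (Compatible G c) then matchOldest G c l ++ m else l ++ matchOldest G c m := by
  induction l with
  | nil => rfl
  | cons o l ih =>
    by_cases ho : Compatible G c o
    · simp [matchOldest, ho]
    · simp only [List.cons_append, matchOldest, ho, Bool.false_eq_true, if_false, ih,
        List.any_cons, Bool.false_or]
      split_ifs <;> rfl

theorem fillsOneSlot_matchOldest {x : MState V} (h : x.any (Compatible G c)) :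
    FillsOneSlot x (matchOldest G c x) := by
  induction x with
  | nil => simp at h
  | cons o x ih =>
    by_cases ho : Compatible G c o
    · cases o with
      | none => simp [Compatible] at ho
      | some d => exact ⟨[], d, x, rfl, by simp [matchOldest, ho]⟩
    · simp only [List.any_cons, ho, Bool.false_or] at h
      simpa [matchOldest, ho] using (ih h).cons o

theorem matchOldest_of_fillsOneSlot {x y : MState V} (h : FillsOneSlot x y) :
    (FillsOneSlot (matchOldest G c x) (matchOldest G c y) ∧
        x.any (Compatible G c) = y.any (Compatible G c)) ∨
      (matchOldest G c x = matchOldest G c y ∧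
        x.any (Compatible G c) = true ∧ y.any (Compatible G c) = false) := by
  obtain ⟨l, d, r, rfl, rfl⟩ := h
  have hnone : Compatible G c none = false := rfl
  by_cases hl : l.any (Compatible G c)
  · left
    simp only [matchOldest_append, hl, if_true, List.any_append, Bool.true_or, and_true]
    exact ⟨_, d, r, rfl, rfl⟩
  simp only [matchOldest_append, hl, Bool.false_eq_true, if_false, List.any_append,
    Bool.false_or, List.any_cons, hnone, matchOldest]
  by_cases hd : Compatible G c (some d)
  · by_cases hr : r.any (Compatible G c)
    · left
      simp only [hd, hr, if_true, Bool.or_self, and_true]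
      exact ((fillsOneSlot_matchOldest hr).cons none).append_left l
    · right
      simp [hd, hr, matchOldest_eq_self (Bool.eq_false_iff.mpr hr)]
  · left
    simp only [hd, Bool.false_eq_true, if_false, Bool.false_or, and_true]
    exact ⟨l, d, _, rfl, rfl⟩

theorem FillsOneSlot.mstep_fcfm {x y : MState V} (h : FillsOneSlot x y) :
    WithinOneItem (mstep (fcfm G) x c) (mstep (fcfm G) y c) := by
  rw [mstep_fcfm_eq, mstep_fcfm_eq]
  rcases matchOldest_of_fillsOneSlot (G := G) (c := c) h with ⟨hm, hany⟩ | ⟨hm, hx, hy⟩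
  · rw [hany]
    exact hm.tail.append_right _
  · rw [hm, hx, hy]
    exact Or.inr (Or.inr ⟨_, c, [], rfl, rfl⟩)

theorem WithinOneItem.mstep_fcfm {x y : MState V} (h : WithinOneItem x y) :
    WithinOneItem (mstep (fcfm G) x c) (mstep (fcfm G) y c) := by
  rcases h with rfl | h | h
  exacts [Or.inl rfl, h.mstep_fcfm, h.mstep_fcfm.symm]

theorem WithinOneItem.W_fcfm {x y : MState V} (h : WithinOneItem x y) (w : List V) :
    WithinOneItem (W (fcfm G) x w) (W (fcfm G) y w) := by
  induction w generalizing x y with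
  | nil => exact h
  | cons b w ih => exact ih h.mstep_fcfm

end FCFM

theorem stmt6_general {V : Type*} (G : SimpleGraph V) [DecidableRel G.Adj]
    (p : ℕ) (a : V) (k : ℕ) (hk : k < p)
    (w : List V) :
    W (fcfm G) (xa p k a) w = W (fcfm G) (xa p (k + 1) a) w ∨
    ∃ i : ℕ, i < p ∧
      (∀ j : ℕ, j ≠ i →
        (W (fcfm G) (xa p k a) w).getD j none = (W (fcfm G) (xa p (k + 1) a) w).getD j none) ∧
      ((∃ d : V, (W (fcfm G) (xa p k a) w).getD i none = some d ∧
          (W (fcfm G) (xa p (k + 1) a) w).getD i none = none) ∨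
       (∃ d : V, (W (fcfm G) (xa p (k + 1) a) w).getD i none = some d ∧
          (W (fcfm G) (xa p k a) w).getD i none = none)) := by
  have hlen : ∀ j ≤ p, (W (fcfm G) (xa p j a) w).length = p := fun j hj => by
    rw [length_W _ (by rw [length_xa hj]; omega), length_xa hj]
  rcases (fillsOneSlot_xa hk a).withinOneItem.W_fcfm (G := G) w with h | h | h
  · exact Or.inl h
  · obtain ⟨i, hi, hagree, d, hx, hy⟩ := h.exists_getD
    exact Or.inr ⟨i, hlen k hk.le ▸ hi, hagree, Or.inl ⟨d, hx, hy⟩⟩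
  · obtain ⟨i, hi, hagree, d, hy, hx⟩ := h.exists_getD
    exact Or.inr ⟨i, hlen (k + 1) hk ▸ hi, fun j hj => (hagree j hj).symm, Or.inr ⟨d, hy, hx⟩⟩

/-- Under FCFM, for every class `a`, every `k ∈ {0,…,p−1}` and every arrival word `w` of
length `p`, the states `W(x^a(k), w)` and `W(x^a(k+1), w)` differ in at most one position,
the difference consisting in one state having a class letter where the other has `0`. -/
theorem stmt6 {V : Type*} [Inhabited V] (G : SimpleGraph V) [DecidableRel G.Adj]
    (p : ℕ) (hp : 0 < p) (a : V) (k : ℕ) (hk : k < p)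
    (w : List V) (hw : w.length = p) :
    W (fcfm G) (xa p k a) w = W (fcfm G) (xa p (k + 1) a) w ∨
    ∃ i : ℕ, i < p ∧
      (∀ j : ℕ, j ≠ i →
        (W (fcfm G) (xa p k a) w).getD j none = (W (fcfm G) (xa p (k + 1) a) w).getD j none) ∧
      ((∃ d : V, (W (fcfm G) (xa p k a) w).getD i none = some d ∧
          (W (fcfm G) (xa p (k + 1) a) w).getD i none = none) ∨
       (∃ d : V, (W (fcfm G) (xa p (k + 1) a) w).getD i none = some d ∧
          (W (fcfm G) (xa p k a) w).getD i none = none)) :=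
  stmt6_general G p a k hk w
end

section
/- For the paw graph G (nodes {1,2,3,4}, edges {1,2},{2,3},{2,4},{3,4}) and deterministic patience p ≥ 1, the number of strongly synchronizing words of length 2p equals N(G,p) = 1 + 2^{2p+3} − 3^{p+1} − 4(p+3)·3^{p−1}. -/
/-!
Write a word of length `2p` as `u ++ v` with `|u| = |v| = p`. The condition says that `v k` has no
neighbour among the letters of the suffix `u k, …, u (p-1)`, so for a fixed `u` the number of
admissible `v` is `∏ k, c(S k)`, where `S k` is the letter set of that suffix and
`c S = #(G.commonNonAdj S)` counts the vertices with no neighbour in `S`. Grouping the words `u`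
of length `n` by their letter set `S`, the sums `W n S = G.supportWeight n S` satisfy
`W (n+1) S = c S · ∑ a ∈ S, (W n S + W n (S \ {a}))`, since prepending `a` to a word with letter
set `S` or `S \ {a}` yields letter set `S`. For the paw, `c S > 0` only when `S ⊆ {1, 3, 4}` or
`S = {2}` (`{0, 2, 3}` and `{1}` in `Fin 4`), and solving the recurrence on these nine sets
yields the closed form.
-/

/-- The paw graph on `{1,2,3,4}` (encoded as `Fin 4` with node `i` encoded by `i − 1`):
edges `{1,2}, {2,3}, {2,4}, {3,4}`. -/
def paw : SimpleGraph (Fin 4) := SimpleGraph.fromRel (fun a b =>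
  (a = 0 ∧ b = 1) ∨ (a = 1 ∧ b = 2) ∨ (a = 1 ∧ b = 3) ∨ (a = 2 ∧ b = 3))

/-- Strong synchronization for a word of length `2p` (0-based indices). -/
def SS {V : Type*} [Inhabited V] (G : SimpleGraph V) (p : ℕ) (w : List V) : Prop :=
  w.length = 2 * p ∧
    ∀ i j : ℕ, i < p → p ≤ j → j ≤ p + i → ¬ G.Adj (w.getD i default) (w.getD j default)

open Finset

lemma List.getD_ofFn_append_ofFn_left {α : Type*} {p : ℕ} (u v : Fin p → α) (d : α)
    (i : Fin p) : (List.ofFn u ++ List.ofFn v).getD i d = u i := by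
  rw [List.getD_append _ _ _ _ (by simp)]
  simp

lemma List.getD_ofFn_append_ofFn_right {α : Type*} {p : ℕ} (u v : Fin p → α) (d : α)
    (k : Fin p) : (List.ofFn u ++ List.ofFn v).getD (p + k) d = v k := by
  rw [List.getD_append_right _ _ _ _ (by simp)]
  simp

lemma Fin.image_univ_cons {α : Type*} [DecidableEq α] {n : ℕ} (a : α) (u : Fin n → α) :
    univ.image (Fin.cons a u : Fin (n + 1) → α) = insert a (univ.image u) := by
  ext x
  simp [Fin.exists_fin_succ, eq_comm]

lemma Fin.image_Ici_zero_cons {α : Type*} [DecidableEq α] {n : ℕ} (a : α) (u : Fin n → α) :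
    (Ici 0).image (Fin.cons a u : Fin (n + 1) → α) = insert a (univ.image u) := by
  ext x
  simp [Fin.exists_fin_succ, eq_comm]

lemma Fin.image_Ici_succ_cons {α : Type*} [DecidableEq α] {n : ℕ} (a : α) (u : Fin n → α)
    (k : Fin n) : (Ici k.succ).image (Fin.cons a u : Fin (n + 1) → α) = (Ici k).image u := by
  ext x
  simp [Fin.exists_fin_succ]

lemma Finset.powerset_singleton {α : Type*} [DecidableEq α] (a : α) :
    ({a} : Finset α).powerset = {∅, {a}} := by
  ext s
  simp [subset_singleton_iff]

lemma Finset.filter_insert_eq_of_mem {α : Type*} [Fintype α] [DecidableEq α] {a : α}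
    {S : Finset α} (ha : a ∈ S) :
    ({T | insert a T = S} : Finset (Finset α)) = {S, S.erase a} := by
  ext T
  simp only [mem_filter, mem_univ, true_and, mem_insert, mem_singleton]
  constructor
  · rintro rfl
    by_cases haT : a ∈ T
    · exact Or.inl (insert_eq_of_mem haT).symm
    · exact Or.inr (erase_insert haT).symm
  · rintro (rfl | rfl)
    · exact insert_eq_of_mem ha
    · exact insert_erase ha

namespace SimpleGraph

variable {V : Type*} [Fintype V] (G : SimpleGraph V) [DecidableRel G.Adj]

def commonNonAdj (S : Finset V) : Finset V := {b | ∀ a ∈ S, ¬ G.Adj a b}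

variable [DecidableEq V]

def suffixWeight {n : ℕ} (u : Fin n → V) : ℕ := ∏ k, #(G.commonNonAdj ((Ici k).image u))

def ssEquivPairs [Inhabited V] (p : ℕ) :
    {w : List V // SS G p w} ≃
      {x : (Fin p → V) × (Fin p → V) // ∀ k i, k ≤ i → ¬ G.Adj (x.1 i) (x.2 k)} where
  toFun w := ⟨(fun i => w.1.getD i default, fun k => w.1.getD (p + k) default),
    fun k i hki => w.2.2 i (p + k) i.2 (by omega) (by simpa using hki)⟩
  invFun x := ⟨List.ofFn x.1.1 ++ List.ofFn x.1.2, by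
    refine ⟨by simp; omega, fun i j hi hpj hji => ?_⟩
    obtain ⟨k, rfl⟩ := Nat.exists_eq_add_of_le hpj
    have h := x.2 ⟨k, by omega⟩ ⟨i, hi⟩ (by simp; omega)
    rwa [← List.getD_ofFn_append_ofFn_left x.1.1 x.1.2 default,
      ← List.getD_ofFn_append_ofFn_right x.1.1 x.1.2 default] at h⟩
  left_inv w := by
    obtain ⟨w, hlen, -⟩ := w
    ext1
    refine List.ext_getElem (by simp [hlen]; omega) fun n _ hn => ?_
    have hn : n < w.length := hn
    simp only [List.getElem_append, List.getElem_ofFn, List.length_ofFn]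
    split_ifs
    · simp [hn]
    · simp [show p + (n - p) = n by omega, hn]
  right_inv x := by
    ext i <;> simp only [List.getD_ofFn_append_ofFn_left, List.getD_ofFn_append_ofFn_right]

lemma card_compatible_eq_suffixWeight {p : ℕ} (u : Fin p → V) :
    #{v : Fin p → V | ∀ k i, k ≤ i → ¬ G.Adj (u i) (v k)} = G.suffixWeight u := by
  rw [suffixWeight, ← Fintype.card_piFinset]
  congr 1
  ext v
  simp [commonNonAdj]

theorem card_ss_eq_sum_suffixWeight [Inhabited V] (p : ℕ) :
    Nat.card {w : List V // SS G p w} = ∑ u : Fin p → V, G.suffixWeight u := by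
  rw [Nat.card_congr ((G.ssEquivPairs p).trans (Equiv.subtypeProdEquivSigmaSubtype
    fun u v : Fin p → V => ∀ k i, k ≤ i → ¬ G.Adj (u i) (v k))),
    Nat.card_eq_fintype_card, Fintype.card_sigma]
  simp only [Fintype.card_subtype, card_compatible_eq_suffixWeight]

lemma suffixWeight_cons {n : ℕ} (a : V) (u : Fin n → V) :
    G.suffixWeight (Fin.cons a u : Fin (n + 1) → V) =
      #(G.commonNonAdj (insert a (univ.image u))) * G.suffixWeight u := by
  simp only [suffixWeight, Fin.prod_univ_succ, Fin.image_Ici_zero_cons, Fin.image_Ici_succ_cons]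

def supportWeight (n : ℕ) (S : Finset V) : ℕ :=
  ∑ u : Fin n → V with univ.image u = S, G.suffixWeight u

lemma sum_suffixWeight_eq_sum_supportWeight (n : ℕ) :
    ∑ u : Fin n → V, G.suffixWeight u = ∑ S, G.supportWeight n S :=
  (sum_fiberwise _ _ _).symm

lemma supportWeight_zero_empty : G.supportWeight 0 ∅ = 1 := by
  simp [supportWeight, suffixWeight]

lemma supportWeight_zero_of_nonempty {S : Finset V} (hS : S.Nonempty) :
    G.supportWeight 0 S = 0 := by
  simp [supportWeight, hS.ne_empty, eq_comm (a := ∅)]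

lemma sum_filter_insert_image_eq (n : ℕ) (a : V) (S : Finset V) :
    ∑ u : Fin n → V with insert a (univ.image u) = S, G.suffixWeight u =
      ∑ T with insert a T = S, G.supportWeight n T := by
  simp only [supportWeight, sum_fiberwise_eq_sum_filter, mem_filter, mem_univ, true_and]

lemma supportWeight_succ (n : ℕ) (S : Finset V) :
    G.supportWeight (n + 1) S =
      ∑ a ∈ S, #(G.commonNonAdj S) * (G.supportWeight n S + G.supportWeight n (S.erase a)) := by
  calc G.supportWeight (n + 1) S
      = ∑ a, ∑ u : Fin n → V with insert a (univ.image u) = S,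
          #(G.commonNonAdj S) * G.suffixWeight u := by
        rw [supportWeight, sum_filter, ← (Fin.consEquiv fun _ => V).sum_comp,
          Fintype.sum_prod_type]
        refine sum_congr rfl fun a _ => ?_
        rw [sum_filter]
        refine sum_congr rfl fun u _ => ?_
        rw [show (Fin.consEquiv fun _ => V) (a, u) = Fin.cons a u from rfl, Fin.image_univ_cons,
          suffixWeight_cons]
        split_ifs with h
        · rw [h]
        · rfl
    _ = ∑ a, #(G.commonNonAdj S) * ∑ T with insert a T = S, G.supportWeight n T := by
        simp only [← mul_sum, sum_filter_insert_image_eq]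
    _ = _ := by
        refine (sum_subset (subset_univ S) fun a _ ha => ?_).symm.trans
          (sum_congr rfl fun a ha => ?_)
        · rw [filter_eq_empty_iff.2 fun T _ (h : insert a T = S) => ha (h ▸ mem_insert_self a T),
            sum_empty, mul_zero]
        · rw [filter_insert_eq_of_mem ha,
            sum_pair fun h : S = S.erase a => notMem_erase a S (h ▸ ha)]

lemma supportWeight_eq_zero {S : Finset V} (hS : S.Nonempty) (h : G.commonNonAdj S = ∅)
    (n : ℕ) : G.supportWeight n S = 0 := by
  cases n with
  | zero => exact G.supportWeight_zero_of_nonempty hS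
  | succ n => simp [supportWeight_succ, h]

lemma supportWeight_succ_empty (n : ℕ) : G.supportWeight (n + 1) ∅ = 0 := by
  simp [supportWeight_succ]

end SimpleGraph

instance : DecidableRel paw.Adj := inferInstanceAs (DecidableRel (SimpleGraph.fromRel _).Adj)

open SimpleGraph

lemma commonNonAdj_paw_eq_empty (S : Finset (Fin 4)) (h₀ : ¬ S ⊆ {0, 2, 3}) (h₁ : S ≠ {1}) :
    paw.commonNonAdj S = ∅ := by
  revert S
  decide

lemma card_commonNonAdj_paw :
    #(paw.commonNonAdj {0}) = 3 ∧ #(paw.commonNonAdj {1}) = 1 ∧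
    #(paw.commonNonAdj {2}) = 2 ∧ #(paw.commonNonAdj {3}) = 2 ∧
    #(paw.commonNonAdj {0, 2}) = 2 ∧ #(paw.commonNonAdj {0, 3}) = 2 ∧
    #(paw.commonNonAdj {2, 3}) = 1 ∧ #(paw.commonNonAdj {0, 2, 3}) = 1 := by
  decide

lemma supportWeight_paw_succ (n : ℕ) :
    (paw.supportWeight (n + 1) {0} : ℤ) = 3 ^ (n + 1) ∧
    (paw.supportWeight (n + 1) {1} : ℤ) = 1 ∧
    (paw.supportWeight (n + 1) {2} : ℤ) = 2 ^ (n + 1) ∧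
    (paw.supportWeight (n + 1) {3} : ℤ) = 2 ^ (n + 1) ∧
    (paw.supportWeight (n + 1) {0, 2} : ℤ) = 2 * 4 ^ (n + 1) - 2 * 3 ^ (n + 1) - 2 ^ (n + 1) ∧
    (paw.supportWeight (n + 1) {0, 3} : ℤ) = 2 * 4 ^ (n + 1) - 2 * 3 ^ (n + 1) - 2 ^ (n + 1) ∧
    (paw.supportWeight (n + 1) {2, 3} : ℤ) = n * 2 ^ (n + 1) ∧
    (paw.supportWeight (n + 1) {0, 2, 3} : ℤ) =
      4 ^ (n + 2) - 4 * 3 ^ (n + 1) - 4 * (n + 1) * 3 ^ n - n * 2 ^ (n + 1) := by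
  induction n with
  | zero =>
    refine ⟨?_, ?_, ?_, ?_, ?_, ?_, ?_, ?_⟩ <;>
    · rw [supportWeight_succ]
      simp [supportWeight_zero_empty, supportWeight_zero_of_nonempty, erase_insert_eq_erase,
        erase_insert_of_ne, card_commonNonAdj_paw]
  | succ n ih =>
    obtain ⟨h₀, h₁, h₂, h₃, h₀₂, h₀₃, h₂₃, h₀₂₃⟩ := ih
    refine ⟨?_, ?_, ?_, ?_, ?_, ?_, ?_, ?_⟩ <;>
    · rw [supportWeight_succ]
      push_cast
      simp [erase_insert_eq_erase, erase_insert_of_ne, card_commonNonAdj_paw,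
        supportWeight_succ_empty, h₀, h₁, h₂, h₃, h₀₂, h₀₃, h₂₃, h₀₂₃] <;>
      ring

lemma sum_supportWeight_paw_succ (n : ℕ) :
    (∑ S, paw.supportWeight (n + 1) S : ℤ) =
      1 + 8 * 4 ^ (n + 1) - 7 * 3 ^ (n + 1) - 4 * (n + 1) * 3 ^ n := by
  obtain ⟨h₀, h₁, h₂, h₃, h₀₂, h₀₃, h₂₃, h₀₂₃⟩ := supportWeight_paw_succ n
  have hsupp : ∀ S ∈ univ, S ∉ insert {1} (powerset {0, 2, 3}) →
      (paw.supportWeight (n + 1) S : ℤ) = 0 := by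
    intro S _ hS
    simp only [mem_insert, mem_powerset, not_or] at hS
    have hne : S.Nonempty := nonempty_iff_ne_empty.2 fun h => hS.2 (h ▸ empty_subset _)
    rw [supportWeight_eq_zero _ hne (commonNonAdj_paw_eq_empty S hS.2 hS.1), Nat.cast_zero]
  rw [← sum_subset (subset_univ _) hsupp]
  simp [sum_powerset_insert, powerset_singleton, supportWeight_succ_empty, h₀, h₁, h₂, h₃, h₀₂,
    h₀₃, h₂₃, h₀₂₃]
  ring

/-- For the paw graph and patience `p ≥ 1`, the number of strongly synchronizing words of
length `2p` is `N(G,p) = 1 + 2^{2p+3} − 3^{p+1} − 4(p+3)·3^{p−1}`. -/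
theorem stmt13 (p : ℕ) (hp : 1 ≤ p) :
    (Nat.card {w : List (Fin 4) // SS paw p w} : ℤ) =
      1 + 2 ^ (2 * p + 3) - 3 ^ (p + 1) - 4 * ((p : ℤ) + 3) * 3 ^ (p - 1) := by
  obtain ⟨n, rfl⟩ := Nat.exists_eq_add_of_le' hp
  have h4 : (2 : ℤ) ^ (2 * (n + 1) + 3) = 8 * 4 ^ (n + 1) := by
    rw [pow_add, pow_mul]
    norm_num [mul_comm]
  rw [card_ss_eq_sum_suffixWeight, sum_suffixWeight_eq_sum_supportWeight, Nat.cast_sum,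
    sum_supportWeight_paw_succ, Nat.add_sub_cancel, h4]
  push_cast
  ring
end

section
/- For the paw graph and any p ≥ 1, the number of strongly synchronizing words of length 2p whose trace is the single letter 1 equals 3^p; whose trace is 2 equals 1; whose trace is 3 (respectively 4) equals 2^p; and whose trace is the two-letter word 13 equals (3/2)·4^p − 2·3^p. -/
/-- The trace of a word: its distinct letters in order of first appearance. -/
def trace {V : Type*} [DecidableEq V] (l : List V) : List V :=
  l.foldl (fun acc c => if c ∈ acc then acc else acc ++ [c]) []

/-! Strong synchronization says exactly that each prefix letter `w i` (`i < p`) is a common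
non-neighbour of the first `i + 1` letters of the suffix. If the trace of the suffix is `a`, the
suffix is `a ^ p` and every prefix letter ranges over the `β(a)` non-neighbours of `a`. If the
trace is `ab`, split by the position `m ∈ [1, p)` of the first `b`: the suffix is
`a ^ m b {a, b} ^ (p - m - 1)` and the prefix letters range over `β(a)` choices before position `m`
and `β(ab)` from there on, so the count is `∑ₘ β(a) ^ m β(ab) ^ (p - m) 2 ^ (p - m - 1)`. For the
paw, `β(1) = 3`, `β(13) = 2`, and this sum evaluates to `3 · 2 ^ (2p - 1) - 2 · 3 ^ p`. -/

open Finset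

lemma List.eq_singleton_of_nodup {V : Type*} {s : List V} {a : V} (hs : s.Nodup)
    (h : ∀ x, x ∈ s ↔ x = a) : s = [a] := by
  rw [← List.perm_singleton, List.perm_ext_iff_of_nodup hs (List.nodup_singleton a)]
  simpa using h

section Trace

variable {V : Type*} [DecidableEq V]

def traceStep (acc : List V) (c : V) : List V := if c ∈ acc then acc else acc ++ [c]

lemma trace_eq_foldl (l : List V) : trace l = l.foldl traceStep [] := rfl

lemma mem_foldl_traceStep (l acc : List V) (x : V) :
    x ∈ l.foldl traceStep acc ↔ x ∈ acc ∨ x ∈ l := by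
  induction l generalizing acc with
  | nil => simp
  | cons c l ih =>
    rw [List.foldl_cons, ih, traceStep]
    split_ifs with hc
    · grind
    · simp [or_assoc]

lemma nodup_foldl_traceStep (l : List V) {acc : List V} (h : acc.Nodup) :
    (l.foldl traceStep acc).Nodup := by
  induction l generalizing acc with
  | nil => exact h
  | cons c l ih =>
    rw [List.foldl_cons, traceStep]
    split_ifs with hc
    · exact ih h
    · exact ih (List.concat_eq_append ▸ h.concat hc)

lemma prefix_foldl_traceStep (l acc : List V) : acc <+: l.foldl traceStep acc := by
  induction l generalizing acc with
  | nil => exact List.prefix_rfl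
  | cons c l ih =>
    rw [List.foldl_cons, traceStep]
    split_ifs
    · exact ih acc
    · exact (List.prefix_append acc [c]).trans (ih _)

lemma mem_trace {l : List V} {x : V} : x ∈ trace l ↔ x ∈ l := by
  simp [trace_eq_foldl, mem_foldl_traceStep]

lemma nodup_trace (l : List V) : (trace l).Nodup := nodup_foldl_traceStep l List.nodup_nil

lemma trace_cons (a : V) (l : List V) : ∃ s, trace (a :: l) = a :: s := by
  obtain ⟨s, hs⟩ := prefix_foldl_traceStep l [a]
  exact ⟨s, by simpa [trace_eq_foldl, traceStep] using hs.symm⟩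

lemma trace_eq_singleton_iff {l : List V} {a : V} : trace l = [a] ↔ ∀ x, x ∈ l ↔ x = a := by
  refine ⟨fun h x => by rw [← mem_trace, h, List.mem_singleton], fun h => ?_⟩
  exact List.eq_singleton_of_nodup (nodup_trace l) fun x => mem_trace.trans (h x)

lemma trace_eq_pair_iff {l : List V} {a b : V} (hab : a ≠ b) :
    trace l = [a, b] ↔ l.head? = some a ∧ ∀ x, x ∈ l ↔ x = a ∨ x = b := by
  constructor
  · intro h
    refine ⟨?_, fun x => by rw [← mem_trace, h]; simp⟩
    cases l with
    | nil => simp [trace] at h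
    | cons c l =>
      obtain ⟨s, hs⟩ := trace_cons c l
      rw [hs, List.cons.injEq] at h
      simp [h.1]
  · rintro ⟨hhead, hmem⟩
    obtain ⟨t, rfl⟩ := List.head?_eq_some_iff.1 hhead
    obtain ⟨s, hs⟩ := trace_cons a t
    have hnd := nodup_trace (a :: t)
    rw [hs, List.nodup_cons] at hnd
    have hmem' : ∀ x, x ∈ a :: s ↔ x = a ∨ x = b := fun x => by rw [← hs, mem_trace, hmem]
    rw [hs, List.eq_singleton_of_nodup hnd.2 fun x => ⟨fun hx => ?_, fun hx => ?_⟩]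
    · rcases (hmem' x).1 (List.mem_cons_of_mem a hx) with rfl | rfl
      · exact absurd hx hnd.1
      · rfl
    · subst hx
      simpa [Ne.symm hab] using (hmem' x).2 (Or.inr rfl)

end Trace

lemma prod_range_ite_lt {M : Type*} [CommMonoid M] (x y : M) {m n : ℕ} (h : m ≤ n) :
    ∏ i ∈ range n, (if i < m then x else y) = x ^ m * y ^ (n - m) := by
  obtain ⟨k, rfl⟩ := Nat.exists_eq_add_of_le h
  rw [prod_range_add, Nat.add_sub_cancel_left]
  congr 1
  · rw [prod_congr rfl fun i hi => if_pos (mem_range.1 hi), prod_const, card_range]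
  · rw [prod_congr rfl fun i _ => if_neg (by omega), prod_const, card_range]

section Counting

variable {V : Type*} [Inhabited V]

lemma getD_drop (l : List V) (n k : ℕ) :
    (l.drop n).getD k default = l.getD (n + k) default := by
  simp [List.getD_eq_getElem?_getD, List.getElem?_drop]

lemma mem_iff_exists_getD {l : List V} {x : V} :
    x ∈ l ↔ ∃ k < l.length, l.getD k default = x := by
  simp only [List.mem_iff_getElem]
  constructor
  · rintro ⟨k, hk, rfl⟩
    exact ⟨k, hk, List.getD_eq_getElem _ _ hk⟩
  · rintro ⟨k, hk, rfl⟩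
    exact ⟨k, hk, (List.getD_eq_getElem _ _ hk).symm⟩

def pointwiseEquiv (n : ℕ) (S : ℕ → Finset V) :
    {w : List V // w.length = n ∧ ∀ i < n, w.getD i default ∈ S i} ≃
      ∀ i : Fin n, S i where
  toFun w i := ⟨w.1.getD i default, w.2.2 i i.isLt⟩
  invFun f := ⟨List.ofFn fun i => (f i).1, List.length_ofFn, fun i hi => by simp [hi]⟩
  left_inv w := Subtype.ext <| List.ext_getElem (by simp [w.2.1]) fun i _ h => by
    simp [List.getElem?_eq_getElem h]
  right_inv f := funext fun i => Subtype.ext <| by simp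

lemma card_pointwise (n : ℕ) (S : ℕ → Finset V) :
    Nat.card {w : List V // w.length = n ∧ ∀ i < n, w.getD i default ∈ S i} =
      ∏ i ∈ range n, #(S i) := by
  rw [Nat.card_congr (pointwiseEquiv n S), Nat.card_pi]
  simp [Fin.prod_univ_eq_prod_range (fun i => #(S i))]

lemma card_pointwise_halves (p : ℕ) (S T : ℕ → Finset V) :
    Nat.card {w : List V // w.length = 2 * p ∧ (∀ i < p, w.getD i default ∈ S i) ∧
      ∀ k < p, (w.drop p).getD k default ∈ T k} =
      (∏ i ∈ range p, #(S i)) * ∏ k ∈ range p, #(T k) := by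
  have halves : ∀ w : List V, ((∀ i < p, w.getD i default ∈ S i) ∧
      ∀ k < p, (w.drop p).getD k default ∈ T k) ↔
      ∀ i < 2 * p, w.getD i default ∈ if i < p then S i else T (i - p) := by
    intro w
    simp only [getD_drop]
    constructor
    · rintro ⟨hS, hT⟩ i hi
      split_ifs with h
      · exact hS i h
      · simpa [show p + (i - p) = i by omega] using hT (i - p) (by omega)
    · intro h
      refine ⟨fun i hi => by simpa [hi] using h i (by omega), fun k hk => ?_⟩
      simpa using h (p + k) (by omega)
  simp_rw [halves]
  rw [card_pointwise, two_mul, prod_range_add]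
  congr 1
  · exact prod_congr rfl fun i hi => by simp [mem_range.1 hi]
  · exact prod_congr rfl fun k _ => by simp

end Counting

section Letters

variable {V : Type*} [DecidableEq V] {u : List V} {a b : V} {i m : ℕ}

def pairPattern (a b : V) (m k : ℕ) : Finset V :=
  if k < m then {a} else if k = m then {b} else {a, b}

lemma card_pairPattern (hab : a ≠ b) (m k : ℕ) :
    #(pairPattern a b m k) = if k < m + 1 then 1 else 2 := by
  unfold pairPattern
  split_ifs <;> first | omega | simp [card_pair hab]

variable [Inhabited V]

def firstLetters (u : List V) (i : ℕ) : Finset V := (range (i + 1)).image (u.getD · default)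

lemma trace_eq_singleton_iff_getD (hu : 0 < u.length) :
    trace u = [a] ↔ ∀ k < u.length, u.getD k default = a := by
  simp only [trace_eq_singleton_iff, mem_iff_exists_getD]
  refine ⟨fun h k hk => (h _).1 ⟨k, hk, rfl⟩, fun h x => ⟨?_, ?_⟩⟩
  · rintro ⟨k, hk, rfl⟩
    exact h k hk
  · rintro rfl
    exact ⟨0, hu, h 0 hu⟩

lemma trace_eq_pair_and_idxOf_iff (hab : a ≠ b) (hm : 0 < m) (hmu : m < u.length) :
    trace u = [a, b] ∧ u.idxOf b = m ↔
      ∀ k < u.length, u.getD k default ∈ pairPattern a b m k := by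
  have getElem_eq : ∀ k (hk : k < u.length), u[k] = u.getD k default :=
    fun k hk => (List.getD_eq_getElem _ _ hk).symm
  have hhead : u.head? = some a ↔ u.getD 0 default = a := by
    cases u with
    | nil => simp at hmu
    | cons c t => simp
  have hsub : ∀ k, pairPattern a b m k ⊆ {a, b} := fun k => by
    unfold pairPattern; split_ifs <;> simp
  rw [trace_eq_pair_iff hab, List.idxOf, List.findIdx_eq hmu, hhead]
  simp only [mem_iff_exists_getD, beq_iff_eq, beq_eq_false_iff_ne, getElem_eq]
  constructor
  · rintro ⟨⟨-, hmem⟩, hbm, hlt⟩ k hk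
    have hk' : u.getD k default = a ∨ u.getD k default = b := (hmem _).1 ⟨k, hk, rfl⟩
    unfold pairPattern
    split_ifs with h1 h2
    · exact mem_singleton.2 (hk'.resolve_right (hlt k h1))
    · exact h2 ▸ mem_singleton.2 hbm
    · simpa only [mem_insert, mem_singleton] using hk'
  · intro h
    have h0 : u.getD 0 default = a := by simpa [pairPattern, hm] using h 0 (by omega)
    have hbm : u.getD m default = b := by simpa [pairPattern] using h m hmu
    refine ⟨⟨h0, fun x => ⟨?_, ?_⟩⟩, hbm, fun j hj => ?_⟩
    · rintro ⟨k, hk, rfl⟩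
      simpa using hsub k (h k hk)
    · rintro (rfl | rfl)
      · exact ⟨0, by omega, h0⟩
      · exact ⟨m, hmu, hbm⟩
    · have := h j (by omega)
      simp only [pairPattern, if_pos hj, mem_singleton] at this
      rw [this]
      exact hab

lemma firstLetters_eq_singleton (h : ∀ k ≤ i, u.getD k default = a) :
    firstLetters u i = {a} := by
  ext x
  simp only [firstLetters, mem_image, mem_range, mem_singleton]
  exact ⟨fun ⟨k, hk, hx⟩ => hx ▸ h k (by omega),
    fun hx => ⟨0, by omega, hx ▸ h 0 (by omega)⟩⟩

lemma firstLetters_eq_pair (h : ∀ k ≤ i, u.getD k default = a ∨ u.getD k default = b)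
    (h0 : u.getD 0 default = a) (hm : m ≤ i) (hb : u.getD m default = b) :
    firstLetters u i = {a, b} := by
  ext x
  simp only [firstLetters, mem_image, mem_range, mem_insert, mem_singleton]
  refine ⟨fun ⟨k, hk, hx⟩ => hx ▸ h k (by omega), ?_⟩
  rintro (rfl | rfl)
  · exact ⟨0, by omega, h0⟩
  · exact ⟨m, by omega, hb⟩

lemma firstLetters_of_pairPattern (hu : ∀ k < u.length, u.getD k default ∈ pairPattern a b m k)
    (hm : 0 < m) (hi : i < u.length) :
    firstLetters u i = if i < m then {a} else {a, b} := by
  have hab : ∀ k < u.length, u.getD k default = a ∨ u.getD k default = b := fun k hk => by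
    have := hu k hk
    simp only [pairPattern] at this
    split_ifs at this <;> simp_all
  split_ifs with him
  · refine firstLetters_eq_singleton fun k hk => ?_
    simpa [pairPattern, show k < m by omega] using hu k (by omega)
  · refine firstLetters_eq_pair (fun k hk => hab k (by omega)) ?_ (not_lt.1 him) ?_
    · simpa [pairPattern, hm] using hu 0 (by omega)
    · simpa [pairPattern] using hu m (by omega)

end Letters

section Synchronizing

variable {V : Type*} [Fintype V] [DecidableEq V] [Inhabited V]
  (G : SimpleGraph V) [DecidableRel G.Adj] {p : ℕ} {w u : List V} {a b : V}

/-- `#(nonNeighborFinset G s)` is the paper's `β(z₁⋯zᵢ)` for `s` the set of letters `zⱼ`.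
-/
def nonNeighborFinset (s : Finset V) : Finset V := {v | ∀ z ∈ s, ¬ G.Adj v z}

lemma ss_iff : SS G p w ↔
    w.length = 2 * p ∧
      ∀ i < p, w.getD i default ∈ nonNeighborFinset G (firstLetters (w.drop p) i) := by
  simp only [SS, nonNeighborFinset, firstLetters, mem_filter, mem_univ, true_and,
    forall_mem_image, mem_range, getD_drop]
  refine and_congr_right fun _ => ⟨fun h i hi k hk => h i (p + k) hi (by omega) (by omega),
    fun h i j hi hpj hj => ?_⟩
  simpa [show p + (j - p) = j by omega] using h i hi (show j - p < i + 1 by omega)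

lemma ss_trace_singleton_iff (hp : 0 < p) :
    SS G p w ∧ trace (w.drop p) = [a] ↔ w.length = 2 * p ∧
      (∀ i < p, w.getD i default ∈ nonNeighborFinset G {a}) ∧
      ∀ k < p, (w.drop p).getD k default ∈ ({a} : Finset V) := by
  rw [ss_iff, and_assoc]
  refine and_congr_right fun hlen => ?_
  have hu : (w.drop p).length = p := by simp [hlen]; omega
  rw [trace_eq_singleton_iff_getD (by rw [hu]; exact hp), hu]
  simp only [mem_singleton]
  exact and_congr_left fun hsuf => forall₂_congr fun i hi => by
    rw [firstLetters_eq_singleton fun k hk => hsuf k (by omega)]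

lemma ss_trace_pair_idxOf_iff (hab : a ≠ b) (hm : 0 < m) (hmp : m < p) :
    (SS G p w ∧ trace (w.drop p) = [a, b]) ∧ (w.drop p).idxOf b = m ↔ w.length = 2 * p ∧
      (∀ i < p, w.getD i default ∈
        if i < m then nonNeighborFinset G {a} else nonNeighborFinset G {a, b}) ∧
      ∀ k < p, (w.drop p).getD k default ∈ pairPattern a b m k := by
  rw [ss_iff, and_assoc, and_assoc]
  refine and_congr_right fun hlen => ?_
  have hu : (w.drop p).length = p := by simp [hlen]; omega
  rw [trace_eq_pair_and_idxOf_iff hab hm (by rw [hu]; exact hmp), hu]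
  refine and_congr_left fun hsuf => forall₂_congr fun i hi => ?_
  rw [firstLetters_of_pairPattern (by rwa [hu]) hm (by rwa [hu]), apply_ite (nonNeighborFinset G)]

lemma card_ss_trace_singleton (hp : 0 < p) :
    Nat.card {w : List V // SS G p w ∧ trace (w.drop p) = [a]} =
      #(nonNeighborFinset G {a}) ^ p := by
  simp_rw [ss_trace_singleton_iff G hp]
  rw [card_pointwise_halves]
  simp

lemma card_ss_trace_pair_idxOf (hab : a ≠ b) (hm : 0 < m) (hmp : m < p) :
    Nat.card {w : List V // (SS G p w ∧ trace (w.drop p) = [a, b]) ∧ (w.drop p).idxOf b = m} =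
      #(nonNeighborFinset G {a}) ^ m * #(nonNeighborFinset G {a, b}) ^ (p - m) *
        2 ^ (p - m - 1) := by
  simp_rw [ss_trace_pair_idxOf_iff G hab hm hmp]
  rw [card_pointwise_halves]
  simp_rw [apply_ite card, card_pairPattern hab]
  rw [prod_range_ite_lt _ _ hmp.le, prod_range_ite_lt _ _ hmp, one_pow, one_mul, Nat.sub_sub]

lemma card_ss_trace_pair (hab : a ≠ b) :
    Nat.card {w : List V // SS G p w ∧ trace (w.drop p) = [a, b]} =
      ∑ m ∈ Ico 1 p, #(nonNeighborFinset G {a}) ^ m * #(nonNeighborFinset G {a, b}) ^ (p - m) *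
        2 ^ (p - m - 1) := by
  set P := fun w : List V => SS G p w ∧ trace (w.drop p) = [a, b]
  have idxOf_mem : ∀ w, P w → (w.drop p).idxOf b ∈ Ico 1 p := by
    rintro w ⟨⟨hlen, -⟩, htr⟩
    obtain ⟨hhead, hmem⟩ := (trace_eq_pair_iff hab).1 htr
    have hb : b ∈ w.drop p := (hmem b).2 (Or.inr rfl)
    have hlt := List.idxOf_lt_length_of_mem hb
    have hne : (w.drop p).idxOf b ≠ 0 := by
      rw [Ne, List.idxOf_eq_zero_iff_eq_nil_or_head_eq]
      rintro (h | h)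
      · simp [h] at hb
      · exact hab (Option.some_injective _ (hhead.symm.trans h))
    simp only [List.length_drop, hlen] at hlt
    simp only [mem_Ico]
    omega
  have : Finite {w // P w} :=
    ((List.finite_length_eq V (2 * p)).subset fun w hw => hw.1.1).to_subtype
  let f : {w // P w} → Ico 1 p := fun w => ⟨_, idxOf_mem w.1 w.2⟩
  rw [← Nat.card_congr (Equiv.sigmaFiberEquiv f), Nat.card_sigma, ← sum_coe_sort (Ico 1 p)]
  refine sum_congr rfl fun m _ => ?_
  have hm := mem_Ico.1 m.2
  rw [← card_ss_trace_pair_idxOf G hab (by omega) hm.2]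
  exact Nat.card_congr ((Equiv.subtypeEquivRight fun x => Subtype.ext_iff).trans
    (Equiv.subtypeSubtypeEquivSubtypeInter P (fun w => (w.drop p).idxOf b = m)))

end Synchronizing

lemma sum_Ico_three_pow_mul_two_pow {p : ℕ} (hp : 1 ≤ p) :
    (∑ m ∈ Ico 1 p, 3 ^ m * 2 ^ (p - m) * 2 ^ (p - m - 1) : ℤ) =
      3 * 2 ^ (2 * p - 1) - 2 * 3 ^ p := by
  induction p, hp using Nat.le_induction with
  | base => norm_num
  | succ p hp ih =>
    have term_succ : ∀ m ∈ Ico 1 p, (3 ^ m * 2 ^ (p + 1 - m) * 2 ^ (p + 1 - m - 1) : ℤ) =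
        4 * (3 ^ m * 2 ^ (p - m) * 2 ^ (p - m - 1)) := fun m hm => by
      have := (mem_Ico.1 hm).2
      rw [show p + 1 - m = p - m + 1 by omega, show p - m + 1 - 1 = p - m - 1 + 1 by omega]
      ring
    rw [sum_Ico_succ_top hp, sum_congr rfl term_succ, ← mul_sum, ih, Nat.add_sub_cancel_left,
      show 2 * (p + 1) - 1 = 2 * p - 1 + 2 by omega]
    ring

instance inst_s14 : DecidableRel paw.Adj := fun a b =>
  decidable_of_iff _ (SimpleGraph.fromRel_adj _ a b).symm

/-- For the paw graph and any `p ≥ 1`, the number of strongly synchronizing words of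
length `2p` with trace `1` is `3^p`; with trace `2` it is `1`; with trace `3`
(resp. `4`) it is `2^p`; and with trace `13` it is `(3/2)·4^p − 2·3^p = 3·2^{2p−1} − 2·3^p`.
(Nodes `1,2,3,4` are encoded as `0,1,2,3`; the trace is taken on the second half
`w_{p+1}⋯w_{2p}`.) -/
theorem stmt14 (p : ℕ) (hp : 1 ≤ p) :
    Nat.card {w : List (Fin 4) // SS paw p w ∧ trace (w.drop p) = [0]} = 3 ^ p ∧
    Nat.card {w : List (Fin 4) // SS paw p w ∧ trace (w.drop p) = [1]} = 1 ∧
    Nat.card {w : List (Fin 4) // SS paw p w ∧ trace (w.drop p) = [2]} = 2 ^ p ∧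
    Nat.card {w : List (Fin 4) // SS paw p w ∧ trace (w.drop p) = [3]} = 2 ^ p ∧
    (Nat.card {w : List (Fin 4) // SS paw p w ∧ trace (w.drop p) = [0, 2]} : ℤ) =
      3 * 2 ^ (2 * p - 1) - 2 * 3 ^ p := by
  have β0 : #(nonNeighborFinset paw {0}) = 3 := by decide
  have β1 : #(nonNeighborFinset paw {1}) = 1 := by decide
  have β2 : #(nonNeighborFinset paw {2}) = 2 := by decide
  have β3 : #(nonNeighborFinset paw {3}) = 2 := by decide
  have β02 : #(nonNeighborFinset paw {0, 2}) = 2 := by decide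
  simp only [card_ss_trace_singleton paw hp, β0, β1, β2, β3, one_pow, true_and]
  rw [card_ss_trace_pair paw (by decide), β0, β02]
  push_cast
  exact sum_Ico_three_pow_mul_two_pow hp
end

section
/- Counting formula for strongly synchronizing words: for any graph G = (𝕍, E) and p ≥ 1, N(G,p) = Σ_{z = z₁⋯z_l ∈ 𝒯(G)} Σ_{1 = k₁ < k₂ < ⋯ < k_l < k_{l+1} = p+1} Π_{i=1}^{l} i^{k_{i+1}−k_i−1} · β(z₁⋯z_i)^{k_{i+1}−k_i}, where 𝒯(G) is the set of words with pairwise distinct letters forming a permutation of a subset U ⊆ 𝕍 with E(U) ≠ 𝕍, and β(z₁⋯z_i) = #{v ∈ 𝕍 : v not adjacent to any of z₁,...,z_i}. -/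
open Classical

/-- `β(z)`: number of nodes compatible with no letter of `z`. -/
noncomputable def beta {V : Type*} (G : SimpleGraph V) (z : List V) : ℕ :=
  Nat.card {v : V // ∀ u ∈ z, ¬ G.Adj v u}

/-- The `k`-sequence `1 = k₁ < k₂ < ⋯ < k_l < k_{l+1} = p+1` encoded by the set
`s = {k₂,…,k_l} ⊆ {2,…,p}`, as a list. -/
def kseq (p : ℕ) (s : Finset ℕ) : List ℕ := (1 :: s.sort (· ≤ ·)) ++ [p + 1]

/-!
Cutting a strongly synchronizing word into halves `x ++ y`, the letter `x i` may be any node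
compatible with `y 0, …, y i`, so `N(G,p) = ∑_y ∏_i β(y 0 ⋯ y i)`, and `β` of a prefix of `y`
only depends on its set of letters, i.e. on the trace read so far. Started from a trace `z₀`, this
sum obeys a recursion on the first letter of `y`: it repeats one of the `|z₀|` letters of `z₀`,
or it is a new letter `b`, which extends the trace to `z₀ ++ [b]`.

Grouping the words by their full trace `z` and by the set `S` of positions where the letters of
`z` first occur, a word whose position `m` is not in `S` has as many choices there as the trace has
letters so far; this gives a closed form (`traceSum`) obeying the same recursion. For the empty
initial trace the first position lies in `S`, and the positions from one first occurrence `k_i` up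
to the next one contribute `i ^ (k_{i+1} - k_i - 1) * β(z₁ ⋯ z_i) ^ (k_{i+1} - k_i)`.
-/

namespace StrongSync

open Finset

section

variable {V : Type*} (G : SimpleGraph V)

lemma beta_congr {z z' : List V} (h : ∀ u, u ∈ z ↔ u ∈ z') : beta G z = beta G z' :=
  Nat.card_congr <| Equiv.subtypeEquivRight fun v => forall_congr' fun u => by rw [h u]

lemma beta_eq_zero {z : List V} (h : ¬ ∃ v : V, ∀ u ∈ z, ¬ G.Adj v u) : beta G z = 0 := by
  have : IsEmpty {v : V // ∀ u ∈ z, ¬ G.Adj v u} := ⟨fun v => h ⟨v.1, v.2⟩⟩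
  exact Nat.card_of_isEmpty

/-- Length of the trace after position `m`, when the first `j` letters of the trace occur
before the positions under consideration and the later ones first occur at the positions `S`. -/
def traceLength (j : ℕ) (S : Finset ℕ) (m : ℕ) : ℕ := j + #{x ∈ S | x ≤ m}

lemma traceLength_of_lt {j : ℕ} {S : Finset ℕ} {m : ℕ} (h : ∀ x ∈ S, m < x) :
    traceLength j S m = j := by
  rw [traceLength, filter_eq_empty_iff.2 fun x hx => not_le.2 (h x hx), card_empty, add_zero]

lemma traceLength_insert {j : ℕ} {S : Finset ℕ} {a m : ℕ} (ha : a ∉ S) (ham : a ≤ m) :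
    traceLength j (insert a S) m = traceLength (j + 1) S m := by
  rw [traceLength, filter_insert, if_pos ham,
    card_insert_of_notMem fun h => ha (mem_filter.1 h).1, traceLength]
  ring

/-- Weight of the positions `T` for words with trace `z`: a position carrying a first occurrence
contributes `β` of the current trace, any other one `β` times the number of letters available. -/
noncomputable def occWeight (z : List V) (j : ℕ) (T S : Finset ℕ) : ℕ :=
  ∏ m ∈ T, (if m ∈ S then 1 else traceLength j S m) * beta G (z.take (traceLength j S m))

variable {G}

lemma occWeight_union {z : List V} {j : ℕ} {T₁ T₂ S : Finset ℕ} (h : Disjoint T₁ T₂) :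
    occWeight G z j (T₁ ∪ T₂) S = occWeight G z j T₁ S * occWeight G z j T₂ S :=
  prod_union h

lemma occWeight_of_lt {z : List V} {j : ℕ} {B S : Finset ℕ} (h : ∀ m ∈ B, ∀ x ∈ S, m < x) :
    occWeight G z j B S = (j * beta G (z.take j)) ^ #B := by
  refine prod_eq_pow_card fun m hm => ?_
  rw [if_neg fun hmS => lt_irrefl m (h m hm m hmS), traceLength_of_lt (h m hm)]

lemma occWeight_insert {z : List V} {j a : ℕ} {T S : Finset ℕ} (haT : a ∉ T)
    (haS : ∀ x ∈ S, a < x) :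
    occWeight G z j (insert a T) S = j * beta G (z.take j) * occWeight G z j T S := by
  have ha : occWeight G z j {a} S = j * beta G (z.take j) := by
    simpa using occWeight_of_lt (G := G) (z := z) (B := {a}) (by simpa using haS)
  rw [insert_eq, occWeight_union (disjoint_singleton_left.2 haT), ha]

lemma occWeight_insert_insert {z : List V} {j a : ℕ} {T S : Finset ℕ} (haT : ∀ m ∈ T, a < m)
    (hST : S ⊆ T) :
    occWeight G z j (insert a T) (insert a S) =
      beta G (z.take (j + 1)) * occWeight G z (j + 1) T S := by
  have haS : a ∉ S := fun h => lt_irrefl a (haT a (hST h))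
  rw [occWeight, prod_insert fun h => lt_irrefl a (haT a h), if_pos (mem_insert_self a S),
    traceLength_insert haS le_rfl, traceLength_of_lt fun x hx => haT x (hST hx), one_mul]
  congr 1
  refine prod_congr rfl fun m hm => ?_
  have ham : a < m := haT m hm
  simp only [traceLength_insert haS ham.le, mem_insert, ham.ne', false_or]

lemma beta_mul_occWeight_eq_prod (z : List V) (p : ℕ) (c : List ℕ) (a j : ℕ)
    (hc : (a :: c).Pairwise (· < ·)) (hcp : ∀ x ∈ c, x ≤ p) (hap : a ≤ p) :
    beta G (z.take (j + 1)) * occWeight G z (j + 1) (Icc (a + 1) p) c.toFinset =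
      ∏ i ∈ range (c.length + 1),
        (i + j + 1) ^ (((a :: c) ++ [p + 1]).getD (i + 1) 0 - ((a :: c) ++ [p + 1]).getD i 0 - 1) *
          beta G (z.take (i + j + 1)) ^
            (((a :: c) ++ [p + 1]).getD (i + 1) 0 - ((a :: c) ++ [p + 1]).getD i 0) := by
  induction c generalizing a j with
  | nil =>
    rw [List.toFinset_nil, occWeight_of_lt (by simp), Nat.card_Icc, List.length_nil, zero_add,
      prod_range_one]
    simp only [List.cons_append, List.nil_append, List.getD_cons_succ, List.getD_cons_zero,
      zero_add]
    rw [show p + 1 - a = p + 1 - (a + 1) + 1 by omega, Nat.add_sub_cancel, mul_pow, pow_succ]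
    ring
  | cons b c ih =>
    obtain ⟨hac, hbc⟩ := List.pairwise_cons.1 hc
    have hab : a < b := hac b List.mem_cons_self
    have hbp : b ≤ p := hcp b List.mem_cons_self
    have hcb : ∀ x ∈ c.toFinset, b < x := by simpa using (List.pairwise_cons.1 hbc).1
    have hsplit : Icc (a + 1) p = Ico (a + 1) b ∪ insert b (Icc (b + 1) p) := by
      ext x; simp only [mem_union, mem_Ico, mem_insert, mem_Icc]; omega
    have hdisj : Disjoint (Ico (a + 1) b) (insert b (Icc (b + 1) p)) := by
      rw [disjoint_left]; intro x; simp only [mem_Ico, mem_insert, mem_Icc]; omega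
    have hlt : ∀ m ∈ Ico (a + 1) b, ∀ x ∈ insert b c.toFinset, m < x := by
      intro m hm x hx
      rcases mem_insert.1 hx with rfl | hx
      · exact (mem_Ico.1 hm).2
      · exact (mem_Ico.1 hm).2.trans (hcb x hx)
    rw [List.toFinset_cons, hsplit, occWeight_union hdisj, occWeight_of_lt hlt,
      occWeight_insert_insert (fun m hm => (mem_Icc.1 hm).1)
        fun x hx => mem_Icc.2 ⟨hcb x hx, hcp x (List.mem_cons_of_mem b (List.mem_toFinset.1 hx))⟩,
      ih b (j + 1) hbc (fun x hx => hcp x (List.mem_cons_of_mem b hx)) hbp,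
      prod_range_succ' _ (b :: c).length]
    have hshift : ∀ k, k + 1 + j + 1 = k + (j + 1) + 1 := fun k => by ring
    simp only [List.cons_append, List.getD_cons_succ, List.getD_cons_zero, zero_add, Nat.card_Ico,
      List.length_cons, hshift]
    rw [show b - a = b - (a + 1) + 1 by omega, Nat.add_sub_cancel, mul_pow, pow_succ]
    ring

lemma sum_powersetCard_succ_insert {M : Type*} [AddCommMonoid M] {a : ℕ} {T : Finset ℕ}
    (ha : a ∉ T) (k : ℕ) (f : Finset ℕ → M) :
    ∑ S ∈ (insert a T).powersetCard (k + 1), f S =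
      ∑ S ∈ T.powersetCard (k + 1), f S + ∑ S ∈ T.powersetCard k, f (insert a S) := by
  have hnot : ∀ {S}, S ∈ T.powersetCard k → a ∉ S := fun hS h => ha ((mem_powersetCard.1 hS).1 h)
  rw [powersetCard_succ_insert ha, sum_union, sum_image]
  · intro S hS S' hS' h
    rw [← erase_insert (hnot hS), ← erase_insert (hnot hS'), h]
  · refine disjoint_left.2 fun S hS hS' => ?_
    obtain ⟨S', -, rfl⟩ := mem_image.1 hS'
    exact ha ((mem_powersetCard.1 hS).1 (mem_insert_self a S'))

variable (G) in
/-- Total weight of the words with trace `z` whose positions are `T`, the first `j` letters of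
`z` having occurred before. -/
noncomputable def traceWeight (T : Finset ℕ) (j : ℕ) (z : List V) : ℕ :=
  ∑ S ∈ T.powersetCard (z.length - j), occWeight G z j T S

lemma traceWeight_insert_self {a : ℕ} {T : Finset ℕ} (ha : a ∉ T) (z : List V) :
    traceWeight G (insert a T) z.length z =
      z.length * beta G z * traceWeight G T z.length z := by
  simp [traceWeight, occWeight_insert ha (S := ∅) (by simp)]

lemma traceWeight_insert {a : ℕ} {T : Finset ℕ} (haT : ∀ m ∈ T, a < m) {j : ℕ} {z : List V}
    (hj : j < z.length) :
    traceWeight G (insert a T) j z =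
      j * beta G (z.take j) * traceWeight G T j z +
        beta G (z.take (j + 1)) * traceWeight G T (j + 1) z := by
  have ha : a ∉ T := fun h => lt_irrefl a (haT a h)
  simp only [traceWeight]
  rw [show z.length - j = z.length - (j + 1) + 1 by omega, sum_powersetCard_succ_insert ha,
    mul_sum, mul_sum]
  congr 1
  · refine sum_congr rfl fun S hS => occWeight_insert ha fun x hx => ?_
    exact haT x ((mem_powersetCard.1 hS).1 hx)
  · exact sum_congr rfl fun S hS => occWeight_insert_insert haT (mem_powersetCard.1 hS).1

end

section

variable {V : Type*} [Fintype V] [DecidableEq V] {G : SimpleGraph V}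

lemma sum_ite_prefix {M : Type*} [AddCommMonoid M] {z₀ : List V} (hz₀ : z₀.Nodup)
    (f : List V → M) :
    ∑ z : {l : List V // l.Nodup}, (if z₀ <+: z.1 then f z.1 else 0) =
      f z₀ + ∑ b ∈ univ.filter (· ∉ z₀),
        ∑ z : {l : List V // l.Nodup}, if z₀ ++ [b] <+: z.1 then f z.1 else 0 := by
  have hpoint : ∀ z : {l : List V // l.Nodup}, (if z₀ <+: z.1 then f z.1 else 0) =
      (if ⟨z₀, hz₀⟩ = z then f z₀ else 0) +
        ∑ b ∈ univ.filter (· ∉ z₀), if z₀ ++ [b] <+: z.1 then f z.1 else 0 := by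
    rintro ⟨z, hz⟩
    by_cases h : z₀ <+: z
    · obtain ⟨_ | ⟨c, t⟩, rfl⟩ := h
      · have h' : ∀ b, ¬ z₀ ++ [b] <+: z₀ := fun b hb => by simpa using hb.length_le
        simp [h']
      · have hc : c ∉ z₀ := fun hc => by
          simp only [List.nodup_append, List.nodup_cons] at hz
          exact (hz.2.2 c hc c List.mem_cons_self) rfl
        simp [List.prefix_append_right_inj, List.cons_prefix_cons, hc]
    · have h' : ∀ b, ¬ z₀ ++ [b] <+: z := fun b hb => h ((List.prefix_append _ _).trans hb)
      have hne : z₀ ≠ z := by rintro rfl; exact h List.prefix_rfl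
      simp [h, h', Subtype.ext_iff, hne]
  rw [Fintype.sum_congr _ _ hpoint, sum_add_distrib, Fintype.sum_ite_eq, sum_comm]

variable (G) in
noncomputable def traceSum (z₀ : List V) (T : Finset ℕ) : ℕ :=
  ∑ z : {l : List V // l.Nodup}, if z₀ <+: z.1 then traceWeight G T z₀.length z.1 else 0

lemma traceSum_empty {z₀ : List V} (hz₀ : z₀.Nodup) : traceSum G z₀ ∅ = 1 := by
  rw [traceSum, sum_ite_prefix hz₀]
  refine (add_eq_left.2 (sum_eq_zero fun b _ => sum_eq_zero fun z _ => ?_)).trans ?_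
  · split_ifs with h
    · have : z₀.length < z.1.length := by simpa using h.length_le
      rw [traceWeight, powersetCard_eq_empty.2 (by simp; omega), sum_empty]
    · rfl
  · simp [traceWeight, occWeight]

lemma traceSum_insert {a : ℕ} {T : Finset ℕ} (haT : ∀ m ∈ T, a < m) {z₀ : List V}
    (hz₀ : z₀.Nodup) :
    traceSum G z₀ (insert a T) =
      z₀.length * beta G z₀ * traceSum G z₀ T +
        ∑ b ∈ univ.filter (· ∉ z₀), beta G (z₀ ++ [b]) * traceSum G (z₀ ++ [b]) T := by
  have ha : a ∉ T := fun h => lt_irrefl a (haT a h)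
  have hstep : ∀ b, ∀ z : {l : List V // l.Nodup},
      (if z₀ ++ [b] <+: z.1 then traceWeight G (insert a T) z₀.length z.1 else 0) =
        z₀.length * beta G z₀ * (if z₀ ++ [b] <+: z.1 then traceWeight G T z₀.length z.1 else 0) +
          beta G (z₀ ++ [b]) *
            (if z₀ ++ [b] <+: z.1 then traceWeight G T (z₀ ++ [b]).length z.1 else 0) := by
    intro b z
    split_ifs with h
    · have hlen : z₀.length < z.1.length := by simpa using h.length_le
      have htake : z.1.take (z₀.length + 1) = z₀ ++ [b] := by
        simpa using (List.prefix_iff_eq_take.1 h).symm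
      have htake₀ : z.1.take z₀.length = z₀ := by
        simpa using (List.prefix_iff_eq_take.1 ((List.prefix_append _ _).trans h)).symm
      rw [traceWeight_insert haT hlen, htake, htake₀, List.length_append, List.length_singleton]
    · simp
  rw [traceSum, sum_ite_prefix hz₀, traceWeight_insert_self ha, traceSum, sum_ite_prefix hz₀,
    mul_add, mul_sum, add_assoc, ← sum_add_distrib]
  congr 2
  ext b
  simp only [hstep, sum_add_distrib, ← mul_sum, traceSum]

end

section

variable {V : Type*} [Fintype V] (G : SimpleGraph V)

noncomputable def prefixCount (z₀ : List V) (n : ℕ) : ℕ :=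
  ∑ y : Fin n → V, ∏ m : Fin n, beta G (z₀ ++ (List.ofFn y).take (m + 1))

variable {G}

lemma prefixCount_congr {z z' : List V} (h : ∀ u, u ∈ z ↔ u ∈ z') (n : ℕ) :
    prefixCount G z n = prefixCount G z' n :=
  sum_congr rfl fun y _ => prod_congr rfl fun m _ => beta_congr G fun u => by simp [h]

lemma prefixCount_succ (z₀ : List V) (n : ℕ) :
    prefixCount G z₀ (n + 1) = ∑ b, beta G (z₀ ++ [b]) * prefixCount G (z₀ ++ [b]) n := by
  rw [prefixCount, ← (Fin.consEquiv fun _ => V).sum_comp, Fintype.sum_prod_type]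
  refine sum_congr rfl fun b _ => ?_
  rw [prefixCount, mul_sum]
  refine sum_congr rfl fun y _ => ?_
  simp [Fin.prod_univ_succ, Fin.consEquiv, List.ofFn_succ]

variable [DecidableEq V]

lemma prefixCount_succ_of_nodup {z₀ : List V} (hz₀ : z₀.Nodup) (n : ℕ) :
    prefixCount G z₀ (n + 1) =
      z₀.length * beta G z₀ * prefixCount G z₀ n +
        ∑ b ∈ univ.filter (· ∉ z₀), beta G (z₀ ++ [b]) * prefixCount G (z₀ ++ [b]) n := by
  have hrepeat : ∀ b ∈ univ.filter (· ∈ z₀),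
      beta G (z₀ ++ [b]) * prefixCount G (z₀ ++ [b]) n = beta G z₀ * prefixCount G z₀ n := by
    intro b hb
    have hmem : ∀ u, u ∈ z₀ ++ [b] ↔ u ∈ z₀ := fun u => by
      simp only [List.mem_append, List.mem_singleton]
      exact ⟨fun h => h.elim id (· ▸ (mem_filter.1 hb).2), .inl⟩
    rw [beta_congr G hmem, prefixCount_congr hmem]
  have hcard : #(univ.filter (· ∈ z₀)) = z₀.length := by
    rw [← List.toFinset_card_of_nodup hz₀]; congr 1; ext; simp
  rw [prefixCount_succ, ← sum_filter_add_sum_filter_not univ (· ∈ z₀), sum_congr rfl hrepeat,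
    sum_const, hcard, smul_eq_mul, mul_assoc]

lemma prefixCount_card_eq_traceSum (T : Finset ℕ) {z₀ : List V} (hz₀ : z₀.Nodup) :
    prefixCount G z₀ #T = traceSum G z₀ T := by
  induction T using induction_on_min generalizing z₀ with
  | empty => rw [traceSum_empty hz₀, card_empty]; simp [prefixCount]
  | insert a T haT ih =>
    rw [card_insert_of_notMem fun h => lt_irrefl a (haT a h), prefixCount_succ_of_nodup hz₀,
      traceSum_insert haT hz₀, ih hz₀]
    congr 1
    refine sum_congr rfl fun b hb => ?_
    have hb : b ∉ z₀ := (mem_filter.1 hb).2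
    rw [ih (by simpa [List.nodup_append, hz₀] using fun a ha (hab : a = b) => hb (hab ▸ ha))]

end

section

variable {V : Type*}

lemma mem_take_ofFn {p : ℕ} {y : Fin p → V} {i : Fin p} {u : V} :
    u ∈ (List.ofFn y).take (i + 1) ↔ ∃ k : Fin p, k ≤ i ∧ y k = u := by
  simp only [List.mem_take_iff_getElem, List.length_ofFn, List.getElem_ofFn]
  exact ⟨fun ⟨j, hj, hu⟩ => ⟨⟨j, by omega⟩, Fin.mk_le_of_le_val (by omega), hu⟩,
    fun ⟨k, hk, hu⟩ => ⟨k, by simp only [Fin.le_def] at hk; omega, hu⟩⟩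

lemma getD_ofFn_append_left {p : ℕ} (x y : Fin p → V) (d : V) (i : Fin p) :
    (List.ofFn x ++ List.ofFn y).getD i d = x i := by
  rw [List.getD_append _ _ _ _ (by simp), List.getD_eq_getElem _ _ (by simp), List.getElem_ofFn]

lemma getD_ofFn_append_right {p : ℕ} (x y : Fin p → V) (d : V) (k : Fin p) :
    (List.ofFn x ++ List.ofFn y).getD (p + k) d = y k := by
  rw [List.getD_append_right _ _ _ _ (by simp), List.length_ofFn, Nat.add_sub_cancel_left,
    List.getD_eq_getElem _ _ (by simp), List.getElem_ofFn]

variable [Inhabited V] (G : SimpleGraph V)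

/-- A strongly synchronizing word `x ++ y` is recorded as the pair `(y, x)` of its halves. -/
def ssEquivHalves (p : ℕ) :
    {w : List V // SS G p w} ≃
      {q : (Fin p → V) × (Fin p → V) // ∀ i k : Fin p, k ≤ i → ¬ G.Adj (q.2 i) (q.1 k)} where
  toFun w := ⟨(fun k => w.1.getD (p + k) default, fun i => w.1.getD i default),
    fun i k hki => w.2.2 i (p + k) i.2 (by omega) (by simp only [Fin.le_def] at hki; omega)⟩
  invFun q := ⟨List.ofFn q.1.2 ++ List.ofFn q.1.1, by simp; ring, fun i j hi hpj hj => by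
    obtain ⟨k, rfl⟩ := Nat.exists_eq_add_of_le hpj
    rw [getD_ofFn_append_left _ _ _ ⟨i, hi⟩, getD_ofFn_append_right _ _ _ ⟨k, by omega⟩]
    exact q.2 ⟨i, hi⟩ ⟨k, by omega⟩ (Fin.mk_le_mk.2 (by omega))⟩
  left_inv w := by
    obtain ⟨w, hlen, -⟩ := w
    refine Subtype.ext (List.ext_getElem (by simp [hlen]; ring) fun n h₁ h₂ => ?_)
    simp only [List.getElem_append, List.getElem_ofFn, List.length_ofFn]
    split_ifs with h
    · simp [h₂]
    · simp [h₂, show p + (n - p) = n by omega]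
  right_inv q := by
    ext i
    · exact getD_ofFn_append_right _ _ _ i
    · exact getD_ofFn_append_left _ _ _ i

lemma card_ss [Fintype V] (p : ℕ) : Nat.card {w : List V // SS G p w} = prefixCount G [] p := by
  rw [Nat.card_congr ((ssEquivHalves G p).trans (Equiv.subtypeProdEquivSigmaSubtype
    fun (y x : Fin p → V) => ∀ i k : Fin p, k ≤ i → ¬ G.Adj (x i) (y k))), Nat.card_sigma]
  refine sum_congr rfl fun y _ => ?_
  rw [Nat.card_congr (Equiv.subtypePiEquivPi
    (p := fun i v => ∀ k : Fin p, k ≤ i → ¬ G.Adj v (y k))), Nat.card_pi]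
  refine prod_congr rfl fun i _ => Nat.card_congr (Equiv.subtypeEquivRight fun v => ?_)
  simp only [List.nil_append, mem_take_ofFn]
  exact ⟨fun h u ⟨k, hk, hu⟩ => hu ▸ h k hk, fun h k hk => h _ ⟨k, hk, rfl⟩⟩

end

section

variable {V : Type*} [Fintype V] [DecidableEq V] (G : SimpleGraph V)

lemma traceWeight_Icc_one {p : ℕ} (hp : 0 < p) (z : List V) :
    traceWeight G (Icc 1 p) 0 z =
      if z ≠ [] ∧ ∃ v : V, ∀ u ∈ z, ¬ G.Adj v u then
        ∑ s ∈ (Icc 2 p).powersetCard (z.length - 1),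
          ∏ i ∈ range z.length,
            (i + 1) ^ ((kseq p s).getD (i + 1) 0 - (kseq p s).getD i 0 - 1) *
              beta G (z.take (i + 1)) ^ ((kseq p s).getD (i + 1) 0 - (kseq p s).getD i 0)
      else 0 := by
  split_ifs with h
  · obtain ⟨k, hk⟩ : ∃ k, z.length = k + 1 := Nat.exists_eq_succ_of_ne_zero (by simpa using h.1)
    have h1 : (1 : ℕ) ∉ Icc 2 p := by simp
    have hIcc : Icc 1 p = insert 1 (Icc 2 p) := by ext; simp; omega
    rw [traceWeight, hIcc, Nat.sub_zero, hk, sum_powersetCard_succ_insert h1, Nat.add_sub_cancel,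
      sum_eq_zero fun S hS => ?_, zero_add]
    · refine sum_congr rfl fun s hs => ?_
      obtain ⟨hs, hsk⟩ := mem_powersetCard.1 hs
      have hsort : (1 :: s.sort (· ≤ ·)).Pairwise (· < ·) := List.pairwise_cons.2
        ⟨fun x hx => (mem_Icc.1 (hs ((mem_sort _).1 hx))).1, (sortedLT_sort s).pairwise⟩
      have := beta_mul_occWeight_eq_prod (G := G) z p (s.sort (· ≤ ·)) 1 0 hsort
        (fun x hx => (mem_Icc.1 (hs ((mem_sort _).1 hx))).2) hp
      rw [sort_toFinset, length_sort, hsk] at this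
      rw [occWeight_insert_insert (fun m hm => (mem_Icc.1 hm).1) hs]
      exact this
    · rw [occWeight_insert h1 fun x hx => (mem_Icc.1 ((mem_powersetCard.1 hS).1 hx)).1, zero_mul,
        zero_mul]
  · refine sum_eq_zero fun S hS => prod_eq_zero (i := p) (by simp; omega) ?_
    obtain ⟨hST, hcard⟩ := mem_powersetCard.1 hS
    have hlen : traceLength 0 S p = z.length := by
      rw [traceLength, filter_true_of_mem fun x hx => (mem_Icc.1 (hST hx)).2, hcard, zero_add,
        Nat.sub_zero]
    rw [hlen, List.take_length]
    rcases not_and_or.1 h with hz | hz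
    · rw [not_not.1 hz] at hcard ⊢
      simp [card_eq_zero.1 hcard]
    · rw [beta_eq_zero G hz, mul_zero]

end

end StrongSync

/-- Counting formula: `N(G,p)` equals the sum, over all traces `z` (words with pairwise
distinct letters whose letter set `U` satisfies `E(U) ≠ 𝕍`) and all sequences
`1 = k₁ < ⋯ < k_l < k_{l+1} = p+1`, of `∏_{i=1}^{l} i^{k_{i+1}−k_i−1} β(z₁⋯z_i)^{k_{i+1}−k_i}`. -/
theorem stmt16 {V : Type*} [Fintype V] [Inhabited V] [DecidableEq V] (G : SimpleGraph V)
    (p : ℕ) (hp : 0 < p) :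
    Nat.card {w : List V // SS G p w} =
      ∑ z : {l : List V // l.Nodup},
        (if z.1 ≠ [] ∧ ∃ v : V, ∀ u ∈ z.1, ¬ G.Adj v u then
          ∑ s ∈ (Finset.Icc 2 p).powersetCard (z.1.length - 1),
            ∏ i ∈ Finset.range z.1.length,
              (i + 1) ^ ((kseq p s).getD (i + 1) 0 - (kseq p s).getD i 0 - 1) *
                beta G (z.1.take (i + 1)) ^
                  ((kseq p s).getD (i + 1) 0 - (kseq p s).getD i 0)
        else 0) := by
  have h := StrongSync.prefixCount_card_eq_traceSum (G := G) (Finset.Icc 1 p) List.nodup_nil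
  rw [Nat.card_Icc, Nat.add_sub_cancel] at h
  rw [StrongSync.card_ss, h, StrongSync.traceSum]
  refine Finset.sum_congr rfl fun z _ => ?_
  rw [if_pos z.1.nil_prefix, List.length_nil]
  exact StrongSync.traceWeight_Icc_one G hp z.1
end
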